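/- arXiv:2308.09214 — 2 statements merged into one kernel-verified Lean document; each statement's English description precedes it below -/
import Mathlib

section
/- For any two measure-valued kernels W₁, W₂ : [0,1]² → P([−1,1]) and any measurable sets S, T ⊆ [0,1], the Wasserstein-1 distance between the measures ∫_{S×T} W₁(x,y) dx dy and ∫_{S×T} W₂(x,y) dx dy equals sup over 1-bounded-Lipschitz ψ of |∫_{S×T} (Γ(ψ,W₁) − Γ(ψ,W₂))(x,y) dx dy|. Consequently, sup_{ψ ∈ L} ‖Γ(ψ,W₁) − Γ(ψ,W₂)‖_□ = sup_{S,T} W₁-dist(∫_{S×T} W₁, ∫_{S×T} W₂), i.e., the generalized cut norm coincides with the Wasserstein cut quantity. -/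
open MeasureTheory Real Set

/-- `Γ(ψ,W)(x,y) = ∫ ψ(ζ) W(x,y)(dζ)`. -/
noncomputable def Gamma (ψ : ℝ → ℝ) (W : ℝ × ℝ → Measure ℝ) (p : ℝ × ℝ) : ℝ :=
  ∫ ζ, ψ ζ ∂(W p)

/-- Test functions with bounded-Lipschitz norm at most 1. -/
def BLball : Set (ℝ → ℝ) :=
  {ψ | (∀ x ∈ Icc (-1 : ℝ) 1, |ψ x| ≤ 1) ∧ LipschitzOnWith 1 ψ (Icc (-1 : ℝ) 1)}

/-- Wasserstein-1 distance (dual form) between two finite measures of equal mass: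
`sup_{ψ ∈ L} ∫ ψ d(μ−ν)`. -/
noncomputable def W1dist (μ ν : Measure ℝ) : ℝ :=
  ⨆ ψ ∈ BLball, ((∫ ζ, ψ ζ ∂μ) - ∫ ζ, ψ ζ ∂ν)

/-- The measure `∫_{S×T} W(x,y) dx dy` obtained by integrating a measure-valued
kernel over `(S ∩ [0,1]) × (T ∩ [0,1])`. -/
noncomputable def intKernel (W : ℝ × ℝ → Measure ℝ) (S T : Set ℝ) : Measure ℝ :=
  ((volume : Measure (ℝ × ℝ)).restrict ((S ∩ Icc 0 1) ×ˢ (T ∩ Icc 0 1))).bind W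

/-!
Every `W p` is a probability measure carried by `[-1,1]`, and a test function `ψ ∈ L` is only
constrained there; replacing `ψ` by its constant extension `extendIcc ψ` off `[-1,1]` changes no
integral and makes it bounded and continuous. For such a function Fubini for the composition
`κ ∘ₘ μ` gives `∫ ψ d(∫_{S×T} W) = ∫_{S×T} Γ(ψ, W)`, so `W1dist` is the supremum over `L` of
`∫_{S×T} (Γ(ψ,W₁) - Γ(ψ,W₂))`. As `L` is closed under `ψ ↦ -ψ`, which negates this quantity,
the supremum equals that of its absolute value. The second identity then only exchanges two
suprema of quantities lying in `[0, 2]`.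
-/

open ProbabilityTheory

/- In `ℝ` an empty or unbounded supremum is `0`, whence the bounds `C` and the
nonnegativity conditions below. -/
namespace Real

variable {α β : Type*} {B : Set α}

lemma biSup_le {f : α → ℝ} {C : ℝ} (hf : ∀ a ∈ B, f a ≤ C) (hC : 0 ≤ C) :
    ⨆ a ∈ B, f a ≤ C :=
  Real.iSup_le (fun a => Real.iSup_le (hf a) hC) hC

lemma biSup_nonneg {f : α → ℝ} (hf : ∀ a ∈ B, 0 ≤ f a) : 0 ≤ ⨆ a ∈ B, f a :=
  Real.iSup_nonneg fun a => Real.iSup_nonneg (hf a)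

lemma le_biSup {f : α → ℝ} {C : ℝ} (hf : ∀ a ∈ B, f a ≤ C) {a : α} (ha : a ∈ B) :
    f a ≤ ⨆ a ∈ B, f a := by
  have hbdd : BddAbove (range fun a => ⨆ _ : a ∈ B, f a) :=
    ⟨max C 0, forall_mem_range.2 fun a =>
      Real.iSup_le (fun ha => (hf a ha).trans (le_max_left _ _)) (le_max_right _ _)⟩
  exact le_ciSup_of_le hbdd a (ciSup_pos (f := fun _ => f a) ha).ge

lemma biSup_eq_biSup_abs {f : α → ℝ} {C : ℝ} (hf : ∀ a ∈ B, f a ≤ C)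
    (hneg : ∀ a ∈ B, ∃ b ∈ B, f b = -f a) :
    ⨆ a ∈ B, f a = ⨆ a ∈ B, |f a| := by
  have habs_le : ∀ a ∈ B, |f a| ≤ ⨆ a ∈ B, f a := fun a ha => by
    obtain ⟨b, hb, hfb⟩ := hneg a ha
    exact abs_le'.2 ⟨le_biSup hf ha, hfb ▸ le_biSup hf hb⟩
  have hnonneg : 0 ≤ ⨆ a ∈ B, f a := by
    rcases B.eq_empty_or_nonempty with rfl | ⟨a, ha⟩
    · simp
    · exact (abs_nonneg _).trans (habs_le a ha)
  have habs_bdd : ∀ a ∈ B, |f a| ≤ C := fun a ha => by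
    obtain ⟨b, hb, hfb⟩ := hneg a ha
    exact abs_le'.2 ⟨hf a ha, hfb ▸ hf b hb⟩
  exact le_antisymm
    (biSup_le (fun a ha => (le_abs_self _).trans (le_biSup habs_bdd ha))
      (biSup_nonneg fun _ _ => abs_nonneg _))
    (biSup_le habs_le hnonneg)

lemma biSup_iSup_comm {f : α → β → ℝ} {C : ℝ} (hf₀ : ∀ a ∈ B, ∀ b, 0 ≤ f a b)
    (hf : ∀ a ∈ B, ∀ b, f a b ≤ C) :
    ⨆ a ∈ B, ⨆ b, f a b = ⨆ b, ⨆ a ∈ B, f a b := by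
  have hC : ∀ a ∈ B, ∀ b, f a b ≤ max C 0 := fun a ha b => (hf a ha b).trans (le_max_left _ _)
  have hbdd_row : ∀ a ∈ B, BddAbove (range (f a)) := fun a ha =>
    ⟨max C 0, forall_mem_range.2 (hC a ha)⟩
  have hbdd_col : BddAbove (range fun b => ⨆ a ∈ B, f a b) :=
    ⟨max C 0, forall_mem_range.2 fun b => biSup_le (hC · · b) (le_max_right _ _)⟩
  have hrow_le : ∀ a ∈ B, ⨆ b, f a b ≤ max C 0 := fun a ha =>
    Real.iSup_le (hC a ha) (le_max_right _ _)
  have hL₀ : 0 ≤ ⨆ a ∈ B, ⨆ b, f a b :=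
    biSup_nonneg fun a ha => Real.iSup_nonneg (hf₀ a ha)
  have hR₀ : 0 ≤ ⨆ b, ⨆ a ∈ B, f a b :=
    Real.iSup_nonneg fun b => biSup_nonneg (hf₀ · · b)
  refine le_antisymm (biSup_le (fun a ha => Real.iSup_le (fun b => ?_) hR₀) hR₀)
    (Real.iSup_le (fun b => biSup_le (fun a ha => ?_) hL₀) hL₀)
  · exact (le_biSup (hC · · b) ha).trans (le_ciSup hbdd_col b)
  · exact (le_ciSup (hbdd_row a ha) b).trans (le_biSup hrow_le ha)

end Real

lemma MeasureTheory.Measure.integral_bind_kernel {α β E : Type*} [MeasurableSpace α]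
    [MeasurableSpace β] [NormedAddCommGroup E] [NormedSpace ℝ E] {μ : Measure α} (κ : Kernel α β)
    {f : β → E} (hf : Integrable f (κ ∘ₘ μ)) :
    ∫ y, f y ∂(κ ∘ₘ μ) = ∫ x, ∫ y, f y ∂κ x ∂μ := by
  rw [Measure.comp_eq_comp_const_apply] at hf ⊢
  rw [Kernel.integral_comp hf, Kernel.const_apply]

noncomputable def extendIcc (ψ : ℝ → ℝ) (x : ℝ) : ℝ :=
  ψ (projIcc (-1) 1 (by norm_num) x)

section extendIcc

variable {ψ : ℝ → ℝ}

lemma extendIcc_of_mem {x : ℝ} (hx : x ∈ Icc (-1 : ℝ) 1) : extendIcc ψ x = ψ x := by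
  simp [extendIcc, projIcc_of_mem _ hx]

lemma continuous_extendIcc (hψ : ContinuousOn ψ (Icc (-1) 1)) : Continuous (extendIcc ψ) :=
  hψ.comp_continuous (continuous_subtype_val.comp continuous_projIcc) fun x => (projIcc _ _ _ x).2

lemma abs_extendIcc_le (hψ : ∀ x ∈ Icc (-1 : ℝ) 1, |ψ x| ≤ 1) (x : ℝ) : |extendIcc ψ x| ≤ 1 :=
  hψ _ (projIcc _ _ _ x).2

lemma integral_extendIcc {ν : Measure ℝ} (hν : ∀ᵐ x ∂ν, x ∈ Icc (-1 : ℝ) 1) :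
    ∫ x, extendIcc ψ x ∂ν = ∫ x, ψ x ∂ν :=
  integral_congr_ae (hν.mono fun _ => extendIcc_of_mem)

end extendIcc

lemma neg_mem_BLball {ψ : ℝ → ℝ} (hψ : ψ ∈ BLball) : (fun x => -ψ x) ∈ BLball :=
  ⟨fun x hx => by simpa using hψ.1 x hx, hψ.2.neg⟩

lemma Gamma_neg (ψ : ℝ → ℝ) (W : ℝ × ℝ → Measure ℝ) (p : ℝ × ℝ) :
    Gamma (fun x => -ψ x) W p = -Gamma ψ W p :=
  integral_neg _

lemma volume_prod_le_one {S T : Set ℝ} (hS : S ⊆ Icc 0 1) (hT : T ⊆ Icc 0 1) :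
    volume (S ×ˢ T) ≤ 1 :=
  calc volume (S ×ˢ T) ≤ volume (Icc (0 : ℝ) 1 ×ˢ Icc (0 : ℝ) 1) := measure_mono (prod_mono hS hT)
    _ = 1 := by rw [Measure.volume_eq_prod, Measure.prod_prod]; simp

section Gamma

variable {κ : Kernel (ℝ × ℝ) ℝ} {ψ : ℝ → ℝ}

lemma Gamma_eq_integral_extendIcc (hκ : ∀ p, ∀ᵐ ζ ∂κ p, ζ ∈ Icc (-1 : ℝ) 1) (p : ℝ × ℝ) :
    Gamma ψ κ p = ∫ ζ, extendIcc ψ ζ ∂κ p :=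
  (integral_extendIcc (hκ p)).symm

lemma stronglyMeasurable_Gamma (hκ : ∀ p, ∀ᵐ ζ ∂κ p, ζ ∈ Icc (-1 : ℝ) 1) (hψ : ψ ∈ BLball) :
    StronglyMeasurable (Gamma ψ κ) := by
  simp only [funext (Gamma_eq_integral_extendIcc hκ)]
  exact (continuous_extendIcc hψ.2.continuousOn).stronglyMeasurable.integral_kernel

lemma abs_Gamma_le_one [IsMarkovKernel κ] (hκ : ∀ p, ∀ᵐ ζ ∂κ p, ζ ∈ Icc (-1 : ℝ) 1)
    (hψ : ψ ∈ BLball) (p : ℝ × ℝ) : |Gamma ψ κ p| ≤ 1 := by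
  rw [Gamma_eq_integral_extendIcc hκ]
  simpa using norm_integral_le_of_norm_le_const (μ := κ p) (f := extendIcc ψ)
    (ae_of_all _ (abs_extendIcc_le hψ.1))

lemma integrableOn_Gamma [IsMarkovKernel κ] (hκ : ∀ p, ∀ᵐ ζ ∂κ p, ζ ∈ Icc (-1 : ℝ) 1)
    (hψ : ψ ∈ BLball) {s : Set (ℝ × ℝ)} (hs : volume s < ⊤) : IntegrableOn (Gamma ψ κ) s :=
  .of_bound hs (stronglyMeasurable_Gamma hκ hψ).aestronglyMeasurable 1
    (ae_of_all _ (abs_Gamma_le_one hκ hψ))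

end Gamma

section intKernel

variable {κ κ₁ κ₂ : Kernel (ℝ × ℝ) ℝ} {ψ : ℝ → ℝ} {S T : Set ℝ}

lemma integral_intKernel [IsMarkovKernel κ] (hκ : ∀ p, ∀ᵐ ζ ∂κ p, ζ ∈ Icc (-1 : ℝ) 1)
    (hψ : ψ ∈ BLball) (hS : S ⊆ Icc 0 1) (hT : T ⊆ Icc 0 1) :
    ∫ ζ, ψ ζ ∂(intKernel κ S T) = ∫ z in S ×ˢ T, Gamma ψ κ z := by
  have : IsFiniteMeasure (volume.restrict (S ×ˢ T)) :=
    isFiniteMeasure_restrict.2 (ne_top_of_le_ne_top ENNReal.one_ne_top (volume_prod_le_one hS hT))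
  have hsupp : ∀ᵐ ζ ∂(κ ∘ₘ volume.restrict (S ×ˢ T)), ζ ∈ Icc (-1 : ℝ) 1 :=
    Measure.ae_comp_of_ae_ae measurableSet_Icc (ae_of_all _ hκ)
  rw [intKernel, inter_eq_left.2 hS, inter_eq_left.2 hT, ← integral_extendIcc hsupp,
    Measure.integral_bind_kernel]
  · simp only [Gamma_eq_integral_extendIcc hκ]
  · exact .of_bound (continuous_extendIcc hψ.2.continuousOn).aestronglyMeasurable 1
      (ae_of_all _ (abs_extendIcc_le hψ.1))

variable [IsMarkovKernel κ₁] [IsMarkovKernel κ₂]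

lemma integral_intKernel_sub (hκ₁ : ∀ p, ∀ᵐ ζ ∂κ₁ p, ζ ∈ Icc (-1 : ℝ) 1)
    (hκ₂ : ∀ p, ∀ᵐ ζ ∂κ₂ p, ζ ∈ Icc (-1 : ℝ) 1) (hψ : ψ ∈ BLball) (hS : S ⊆ Icc 0 1)
    (hT : T ⊆ Icc 0 1) :
    ∫ ζ, ψ ζ ∂(intKernel κ₁ S T) - ∫ ζ, ψ ζ ∂(intKernel κ₂ S T)
      = ∫ z in S ×ˢ T, (Gamma ψ κ₁ z - Gamma ψ κ₂ z) := by
  have hST : volume (S ×ˢ T) < ⊤ := (volume_prod_le_one hS hT).trans_lt ENNReal.one_lt_top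
  rw [integral_intKernel hκ₁ hψ hS hT, integral_intKernel hκ₂ hψ hS hT,
    integral_sub (integrableOn_Gamma hκ₁ hψ hST) (integrableOn_Gamma hκ₂ hψ hST)]

lemma abs_setIntegral_Gamma_sub_le_two (hκ₁ : ∀ p, ∀ᵐ ζ ∂κ₁ p, ζ ∈ Icc (-1 : ℝ) 1)
    (hκ₂ : ∀ p, ∀ᵐ ζ ∂κ₂ p, ζ ∈ Icc (-1 : ℝ) 1) (hψ : ψ ∈ BLball) (hS : S ⊆ Icc 0 1)
    (hT : T ⊆ Icc 0 1) : |∫ z in S ×ˢ T, (Gamma ψ κ₁ z - Gamma ψ κ₂ z)| ≤ 2 := by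
  have hST := volume_prod_le_one hS hT
  have hbound : ∀ z ∈ S ×ˢ T, ‖Gamma ψ κ₁ z - Gamma ψ κ₂ z‖ ≤ 2 := fun z _ =>
    (abs_sub _ _).trans (by linarith [abs_Gamma_le_one hκ₁ hψ z, abs_Gamma_le_one hκ₂ hψ z])
  have hreal : volume.real (S ×ˢ T) ≤ 1 :=
    ENNReal.toReal_le_of_le_ofReal zero_le_one (by simpa using hST)
  calc |∫ z in S ×ˢ T, (Gamma ψ κ₁ z - Gamma ψ κ₂ z)|
      ≤ 2 * volume.real (S ×ˢ T) :=
        norm_setIntegral_le_of_norm_le_const (hST.trans_lt ENNReal.one_lt_top) hbound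
    _ ≤ 2 := by linarith

lemma W1dist_intKernel (hκ₁ : ∀ p, ∀ᵐ ζ ∂κ₁ p, ζ ∈ Icc (-1 : ℝ) 1)
    (hκ₂ : ∀ p, ∀ᵐ ζ ∂κ₂ p, ζ ∈ Icc (-1 : ℝ) 1) (hS : S ⊆ Icc 0 1) (hT : T ⊆ Icc 0 1) :
    W1dist (intKernel κ₁ S T) (intKernel κ₂ S T)
      = ⨆ ψ ∈ BLball, |∫ z in S ×ˢ T, (Gamma ψ κ₁ z - Gamma ψ κ₂ z)| := by
  calc W1dist (intKernel κ₁ S T) (intKernel κ₂ S T)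
      = ⨆ ψ ∈ BLball, ∫ z in S ×ˢ T, (Gamma ψ κ₁ z - Gamma ψ κ₂ z) :=
        iSup_congr fun ψ => iSup_congr fun hψ => integral_intKernel_sub hκ₁ hκ₂ hψ hS hT
    _ = _ := by
      refine Real.biSup_eq_biSup_abs (C := 2)
        (fun ψ hψ => (le_abs_self _).trans (abs_setIntegral_Gamma_sub_le_two hκ₁ hκ₂ hψ hS hT))
        fun ψ hψ => ⟨_, neg_mem_BLball hψ, ?_⟩
      simp only [Gamma_neg, neg_sub_neg, ← integral_neg, neg_sub]

end intKernel

/-- For measure-valued kernels `W₁, W₂` and measurable `S, T ⊆ [0,1]`, the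
Wasserstein-1 distance between `∫_{S×T} W₁` and `∫_{S×T} W₂` equals the supremum
over 1-bounded-Lipschitz `ψ` of `|∫_{S×T} (Γ(ψ,W₁) − Γ(ψ,W₂))|`; consequently the
generalized cut norm `sup_ψ ‖Γ(ψ,W₁) − Γ(ψ,W₂)‖_□` coincides with the Wasserstein
cut quantity `sup_{S,T} W₁-dist(∫_{S×T} W₁, ∫_{S×T} W₂)`. -/
theorem stmt3 (W₁ W₂ : ℝ × ℝ → Measure ℝ)
    (h₁ : ∀ p, IsProbabilityMeasure (W₁ p)) (h₂ : ∀ p, IsProbabilityMeasure (W₂ p))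
    (hs₁ : ∀ p, W₁ p (Icc (-1 : ℝ) 1) = 1) (hs₂ : ∀ p, W₂ p (Icc (-1 : ℝ) 1) = 1)
    (hm₁ : Measurable W₁) (hm₂ : Measurable W₂) :
    (∀ S T : Set ℝ, MeasurableSet S → MeasurableSet T → S ⊆ Icc 0 1 → T ⊆ Icc 0 1 →
      W1dist (intKernel W₁ S T) (intKernel W₂ S T)
        = ⨆ ψ ∈ BLball, |∫ z in S ×ˢ T, (Gamma ψ W₁ z - Gamma ψ W₂ z)|)
    ∧ (⨆ ψ ∈ BLball, ⨆ q : {q : Set ℝ × Set ℝ // MeasurableSet q.1 ∧ MeasurableSet q.2 ∧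
          q.1 ⊆ Icc 0 1 ∧ q.2 ⊆ Icc 0 1},
          |∫ z in q.1.1 ×ˢ q.1.2, (Gamma ψ W₁ z - Gamma ψ W₂ z)|)
      = ⨆ q : {q : Set ℝ × Set ℝ // MeasurableSet q.1 ∧ MeasurableSet q.2 ∧
          q.1 ⊆ Icc 0 1 ∧ q.2 ⊆ Icc 0 1},
          W1dist (intKernel W₁ q.1.1 q.1.2) (intKernel W₂ q.1.1 q.1.2) := by
  obtain ⟨κ₁, rfl⟩ : ∃ κ : Kernel (ℝ × ℝ) ℝ, ⇑κ = W₁ := ⟨⟨W₁, hm₁⟩, rfl⟩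
  obtain ⟨κ₂, rfl⟩ : ∃ κ : Kernel (ℝ × ℝ) ℝ, ⇑κ = W₂ := ⟨⟨W₂, hm₂⟩, rfl⟩
  have : IsMarkovKernel κ₁ := ⟨h₁⟩
  have : IsMarkovKernel κ₂ := ⟨h₂⟩
  have hκ₁ : ∀ p, ∀ᵐ ζ ∂κ₁ p, ζ ∈ Icc (-1 : ℝ) 1 := fun p =>
    (mem_ae_iff_prob_eq_one measurableSet_Icc).2 (hs₁ p)
  have hκ₂ : ∀ p, ∀ᵐ ζ ∂κ₂ p, ζ ∈ Icc (-1 : ℝ) 1 := fun p =>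
    (mem_ae_iff_prob_eq_one measurableSet_Icc).2 (hs₂ p)
  refine ⟨fun S T _ _ hS hT => W1dist_intKernel hκ₁ hκ₂ hS hT, ?_⟩
  rw [Real.biSup_iSup_comm (C := 2) (fun _ _ _ => abs_nonneg _)
    fun ψ hψ q => abs_setIntegral_Gamma_sub_le_two hκ₁ hκ₂ hψ q.2.2.2.1 q.2.2.2.2]
  exact iSup_congr fun q => (W1dist_intKernel hκ₁ hκ₂ q.2.2.2.1 q.2.2.2.2).symm
end

section
/- Let (S_k)_{k ≥ 0} be a symmetric simple random walk with step size 1/n² on {0, 1/n², 2/n², …, 1} reflected at the boundary {0,1}, started at some point x of the grid, and let ℓ_n = ⌈σ²γ_n n⁴/r⁴⌉ with γ_n n² → ∞. Then (1/(γ_n n⁴)) ∑_{k=1}^{ℓ_n} 1{S_k ∈ {0,1}} → 0 in probability as n → ∞. -/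
/-!
The function `q s = s (1 - s)` is a Lyapunov function for the reflected walk with step `h`: over
one step the expected change of `q` is at least `-h²`, and at least `h - h²` from a boundary
point. Since `0 ≤ q ≤ 1/4`, telescoping bounds the expected number of boundary visits before time
`ℓ + 1` by `1/(4h) + (ℓ + 1) h`, which is `n²/4 + (ℓ + 1)/n²` for `h = 1/n²`. After division by
`γₙ n⁴` this is `O(1/(γₙ n²) + 1/n²)`, and Markov's inequality concludes.
-/

open MeasureTheory ProbabilityTheory Filter Set
open scoped ENNReal

/-- The two-sided reflection into `[0, 1]` of a point of `[-1, 2]`. -/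
noncomputable def reflect (y : ℝ) : ℝ := 1 - abs (1 - abs y)

@[fun_prop]
lemma continuous_reflect : Continuous reflect := by
  unfold reflect; fun_prop

lemma reflect_of_mem_Icc {y : ℝ} (hy : y ∈ Icc 0 1) : reflect y = y := by
  rw [reflect, abs_of_nonneg hy.1, abs_of_nonneg (sub_nonneg.2 hy.2)]; ring

lemma reflect_neg (y : ℝ) : reflect (-y) = reflect y := by
  rw [reflect, reflect, abs_neg]

lemma reflect_two_sub_of_mem_Icc {y : ℝ} (hy : y ∈ Icc 0 2) : reflect (2 - y) = reflect y := by
  rw [reflect, reflect, abs_of_nonneg hy.1, abs_of_nonneg (by linarith [hy.2] : 0 ≤ 2 - y),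
    ← abs_neg]; ring_nf

lemma reflect_mem_Icc {y : ℝ} (hy : y ∈ Icc (-1) 2) : reflect y ∈ Icc 0 1 := by
  rw [reflect]
  constructor
  · rw [sub_nonneg, abs_le]; constructor <;> cases abs_cases y <;> linarith [hy.1, hy.2]
  · linarith [abs_nonneg (1 - |y|)]

/-- Equality holds unless `0 < s < h` or `1 - h < s < 1`, where the reflection pushes the walk
further into the interior. -/
lemma quad_reflect_add_sub_ge {s h : ℝ} (hs : s ∈ Icc 0 1) (h0 : 0 < h) (h1 : h ≤ 1 / 2) :
    2 * (s * (1 - s)) - 2 * h ^ 2 + 2 * h * ({0, 1} : Set ℝ).indicator 1 s ≤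
      reflect (s + h) * (1 - reflect (s + h)) + reflect (s - h) * (1 - reflect (s - h)) := by
  obtain ⟨hs0, hs1⟩ := hs
  have hnot (hpos : 0 < s) (hlt : s < 1) : s ∉ ({0, 1} : Set ℝ) := by
    rintro (rfl | rfl) <;> linarith
  rcases lt_or_ge s h with hlo | hlo
  · rw [reflect_of_mem_Icc ⟨by linarith, by linarith⟩, ← reflect_neg,
      reflect_of_mem_Icc ⟨by linarith, by linarith⟩]
    rcases hs0.eq_or_lt with rfl | hpos
    · rw [indicator_of_mem (by simp), Pi.one_apply]; nlinarith
    · rw [indicator_of_notMem (hnot hpos (by linarith))]; nlinarith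
  rcases le_or_gt s (1 - h) with hhi | hhi
  · rw [reflect_of_mem_Icc ⟨by linarith, by linarith⟩,
      reflect_of_mem_Icc ⟨by linarith, by linarith⟩,
      indicator_of_notMem (hnot (by linarith) (by linarith))]
    nlinarith
  · rw [← reflect_two_sub_of_mem_Icc ⟨by linarith, by linarith⟩,
      reflect_of_mem_Icc ⟨by linarith, by linarith⟩, reflect_of_mem_Icc ⟨by linarith, by linarith⟩]
    rcases hs1.eq_or_lt with rfl | hlt
    · rw [indicator_of_mem (by simp), Pi.one_apply]; nlinarith
    · rw [indicator_of_notMem (hnot (by linarith) hlt)]; nlinarith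

noncomputable def rademacher : Measure ℝ :=
  (1 / 2 : ℝ≥0∞) • Measure.dirac (-1) + (1 / 2 : ℝ≥0∞) • Measure.dirac 1

section Rademacher

variable {Ω : Type*} [MeasurableSpace Ω] {P : Measure Ω} {ξ : Ω → ℝ}

lemma measure_preimage_of_map_eq_rademacher (hξ : Measurable ξ) (hlaw : P.map ξ = rademacher)
    {s : Set ℝ} (hs : MeasurableSet s) :
    P (ξ ⁻¹' s) = (1 / 2 : ℝ≥0∞) * s.indicator 1 (-1) + (1 / 2 : ℝ≥0∞) * s.indicator 1 1 := by
  rw [← Measure.map_apply hξ hs, hlaw, rademacher]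
  simp [Measure.dirac_apply' _ hs]

lemma ae_eq_neg_one_or_one_of_map_eq_rademacher (hξ : Measurable ξ)
    (hlaw : P.map ξ = rademacher) : ∀ᵐ ω ∂P, ξ ω = -1 ∨ ξ ω = 1 := by
  have hs : MeasurableSet ({-1, 1} : Set ℝ)ᶜ := (measurableSet_singleton 1).insert (-1) |>.compl
  rw [ae_iff]
  convert measure_preimage_of_map_eq_rademacher hξ hlaw hs using 2
  · ext; simp [not_or]
  · simp

lemma measureReal_preimage_one_of_map_eq_rademacher (hξ : Measurable ξ)
    (hlaw : P.map ξ = rademacher) : P.real (ξ ⁻¹' {1}) = 1 / 2 := by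
  rw [measureReal_def, measure_preimage_of_map_eq_rademacher hξ hlaw (measurableSet_singleton 1)]
  norm_num [ENNReal.toReal_div]

lemma integral_comp_of_indepFun_rademacher [IsProbabilityMeasure P] {X : Ω → ℝ}
    (hX : Measurable X) (hξ : Measurable ξ) (hlaw : P.map ξ = rademacher)
    (hind : IndepFun ξ X P) {F : ℝ → ℝ → ℝ} (hF : ∀ e, Measurable (F · e))
    (hint : ∀ e, Integrable (fun ω ↦ F (X ω) e) P) :
    ∫ ω, F (X ω) (ξ ω) ∂P = (∫ ω, F (X ω) 1 ∂P + ∫ ω, F (X ω) (-1) ∂P) / 2 := by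
  set A := ξ ⁻¹' {1}
  have hAξ : MeasurableSet[MeasurableSpace.comap ξ inferInstance] A :=
    ⟨{1}, measurableSet_singleton 1, rfl⟩
  have hA : MeasurableSet A := hξ (measurableSet_singleton 1)
  have hindep := (IndepFun_iff_Indep ξ X P).1 hind
  have hPA := measureReal_preimage_one_of_map_eq_rademacher hξ hlaw
  have hsplit : (fun ω ↦ F (X ω) (ξ ω)) =ᵐ[P]
      fun ω ↦ A.indicator (fun ω ↦ F (X ω) 1) ω + Aᶜ.indicator (fun ω ↦ F (X ω) (-1)) ω := by
    filter_upwards [ae_eq_neg_one_or_one_of_map_eq_rademacher hξ hlaw] with ω hω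
    by_cases h : ω ∈ A
    · rw [indicator_of_mem h, indicator_of_notMem (notMem_compl_iff.2 h), add_zero,
        show ξ ω = 1 from h]
    · rw [indicator_of_notMem h, indicator_of_mem h, zero_add, hω.resolve_right h]
  rw [integral_congr_ae hsplit,
    integral_add ((hint 1).indicator hA) ((hint (-1)).indicator hA.compl),
    integral_indicator hA, integral_indicator hA.compl,
    hindep.setIntegral_eq_mul hξ.comap_le hX.aemeasurable hAξ (hF 1).aestronglyMeasurable,
    hindep.setIntegral_eq_mul hξ.comap_le hX.aemeasurable hAξ.compl (hF (-1)).aestronglyMeasurable,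
    probReal_compl_eq_one_sub hA, hPA]
  ring

end Rademacher

lemma integrable_comp_of_ae_mem_Icc {Ω : Type*} [MeasurableSpace Ω] {P : Measure Ω}
    [IsFiniteMeasure P] {X : Ω → ℝ} (hX : AEMeasurable X P) {a b : ℝ}
    (hXab : ∀ᵐ ω ∂P, X ω ∈ Icc a b) {g : ℝ → ℝ} (hg : Continuous g) :
    Integrable (fun ω ↦ g (X ω)) P := by
  obtain ⟨C, hC⟩ := isCompact_Icc.exists_bound_of_continuousOn hg.continuousOn
  exact .of_bound (hg.measurable.comp_aemeasurable hX).aestronglyMeasurable C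
    (by filter_upwards [hXab] with ω hω using hC _ hω)

lemma measure_ge_le_ofReal_div {Ω : Type*} [MeasurableSpace Ω] {P : Measure Ω} [IsFiniteMeasure P]
    {Y : Ω → ℝ} (hY : 0 ≤ᵐ[P] Y) (hYi : Integrable Y P) {δ B : ℝ} (hδ : 0 < δ)
    (hB : ∫ ω, Y ω ∂P ≤ B) : P {ω | δ ≤ Y ω} ≤ ENNReal.ofReal (B / δ) := by
  rw [← ofReal_measureReal]
  refine ENNReal.ofReal_le_ofReal ?_
  rw [le_div_iff₀ hδ, mul_comm]
  exact (mul_meas_ge_le_integral_of_nonneg hY hYi δ).trans hB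

noncomputable def boundaryTime {Ω : Type*} (S : ℕ → Ω → ℝ) (L : ℕ) (ω : Ω) : ℝ :=
  ∑ k ∈ Finset.Icc 1 L, if S k ω = 0 ∨ S k ω = 1 then 1 else 0

lemma boundaryTime_nonneg {Ω : Type*} (S : ℕ → Ω → ℝ) (L : ℕ) (ω : Ω) : 0 ≤ boundaryTime S L ω :=
  Finset.sum_nonneg fun _ _ ↦ by split_ifs <;> norm_num

lemma ite_eq_indicator_preimage {Ω : Type*} (X : Ω → ℝ) :
    (fun ω ↦ if X ω = 0 ∨ X ω = 1 then (1 : ℝ) else 0) = (X ⁻¹' {0, 1}).indicator 1 := by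
  classical
  funext ω
  simp [indicator_apply]

structure IsReflectedWalk {Ω : Type*} [MeasurableSpace Ω] (P : Measure Ω) (ξ : ℕ → Ω → ℝ)
    (h x₀ : ℝ) (S : ℕ → Ω → ℝ) : Prop where
  measurable_step : ∀ k, Measurable (ξ k)
  iIndepFun_step : iIndepFun ξ P
  map_step : ∀ k, P.map (ξ k) = rademacher
  init : ∀ ω, S 0 ω = x₀
  succ : ∀ k ω, S (k + 1) ω = reflect (S k ω + h * ξ (k + 1) ω)

namespace IsReflectedWalk

variable {Ω : Type*} [MeasurableSpace Ω] {P : Measure Ω} {ξ S : ℕ → Ω → ℝ} {h x₀ : ℝ}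

lemma adapted (hS : IsReflectedWalk P ξ h x₀ S) :
    Adapted (Filtration.natural ξ fun k ↦ (hS.measurable_step k).stronglyMeasurable) S := by
  have hξ := Filtration.stronglyAdapted_natural (u := ξ)
    (fun k ↦ (hS.measurable_step k).stronglyMeasurable)
  intro k
  induction k with
  | zero => rw [funext hS.init]; exact measurable_const
  | succ k ih =>
    rw [funext (hS.succ k)]
    exact continuous_reflect.measurable.comp
      ((ih.mono (Filtration.mono _ k.le_succ) le_rfl).add ((hξ (k + 1)).measurable.const_mul h))

lemma measurable (hS : IsReflectedWalk P ξ h x₀ S) (k : ℕ) : Measurable (S k) :=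
  hS.adapted.measurable

lemma indepFun_step (hS : IsReflectedWalk P ξ h x₀ S) (k : ℕ) : IndepFun (ξ (k + 1)) (S k) P := by
  rw [IndepFun_iff_Indep]
  exact indep_of_indep_of_le_right
    (hS.iIndepFun_step.indep_comap_natural_of_lt _ k.lt_succ_self) (hS.adapted k).comap_le

lemma ae_mem_Icc (hS : IsReflectedWalk P ξ h x₀ S) (hx₀ : x₀ ∈ Icc 0 1) (hh : h ∈ Icc 0 1) :
    ∀ᵐ ω ∂P, ∀ k, S k ω ∈ Icc 0 1 := by
  have hξ : ∀ᵐ ω ∂P, ∀ k, ξ k ω = -1 ∨ ξ k ω = 1 := ae_all_iff.2 fun k ↦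
    ae_eq_neg_one_or_one_of_map_eq_rademacher (hS.measurable_step k) (hS.map_step k)
  filter_upwards [hξ] with ω hω k
  induction k with
  | zero => rw [hS.init]; exact hx₀
  | succ k ih =>
    rw [hS.succ]
    apply reflect_mem_Icc
    rcases hω (k + 1) with e | e <;> rw [e] <;> constructor <;> nlinarith [ih.1, ih.2, hh.1, hh.2]

variable [IsProbabilityMeasure P]

lemma integrable_comp (hS : IsReflectedWalk P ξ h x₀ S) (hx₀ : x₀ ∈ Icc 0 1) (hh : h ∈ Icc 0 1)
    (k : ℕ) {g : ℝ → ℝ} (hg : Continuous g) : Integrable (fun ω ↦ g (S k ω)) P :=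
  integrable_comp_of_ae_mem_Icc (hS.measurable k).aemeasurable
    (by filter_upwards [hS.ae_mem_Icc hx₀ hh] with ω hω using hω k) hg

lemma integral_comp_succ (hS : IsReflectedWalk P ξ h x₀ S) (hx₀ : x₀ ∈ Icc 0 1)
    (hh : h ∈ Icc 0 1) (k : ℕ) {g : ℝ → ℝ} (hg : Continuous g) :
    ∫ ω, g (S (k + 1) ω) ∂P =
      (∫ ω, g (reflect (S k ω + h)) ∂P + ∫ ω, g (reflect (S k ω - h)) ∂P) / 2 := by
  simp_rw [hS.succ k]
  convert integral_comp_of_indepFun_rademacher (hS.measurable k) (hS.measurable_step (k + 1))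
    (hS.map_step (k + 1)) (hS.indepFun_step k) (F := fun x e ↦ g (reflect (x + h * e)))
    (by fun_prop) (fun e ↦ hS.integrable_comp hx₀ hh k (g := fun x ↦ g (reflect (x + h * e)))
      (by fun_prop)) using 4 <;> simp [sub_eq_add_neg]

lemma integral_quad_succ_ge (hS : IsReflectedWalk P ξ h x₀ S) (hx₀ : x₀ ∈ Icc 0 1)
    (h0 : 0 < h) (h1 : h ≤ 1 / 2) (k : ℕ) :
    ∫ ω, S k ω * (1 - S k ω) ∂P - h ^ 2 + h * P.real (S k ⁻¹' {0, 1}) ≤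
      ∫ ω, S (k + 1) ω * (1 - S (k + 1) ω) ∂P := by
  have hh : h ∈ Icc 0 1 := ⟨h0.le, by linarith⟩
  have hB : MeasurableSet (S k ⁻¹' {0, 1}) := hS.measurable k (by measurability)
  have hbdry_int : Integrable (fun ω ↦ ({0, 1} : Set ℝ).indicator (1 : ℝ → ℝ) (S k ω)) P :=
    (integrable_const (1 : ℝ)).indicator hB
  have hbdry : ∫ ω, ({0, 1} : Set ℝ).indicator 1 (S k ω) ∂P = P.real (S k ⁻¹' {0, 1}) :=
    integral_indicator_one hB
  have hq_int := hS.integrable_comp hx₀ hh k (g := fun s ↦ s * (1 - s)) (by fun_prop)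
  have hlin_int : Integrable (fun ω ↦ 2 * (S k ω * (1 - S k ω)) - 2 * h ^ 2) P :=
    (hq_int.const_mul 2).sub (integrable_const _)
  have hplus_int := hS.integrable_comp hx₀ hh k
    (g := fun x ↦ reflect (x + h) * (1 - reflect (x + h))) (by fun_prop)
  have hminus_int := hS.integrable_comp hx₀ hh k
    (g := fun x ↦ reflect (x - h) * (1 - reflect (x - h))) (by fun_prop)
  have hpoint : ∀ᵐ ω ∂P, 2 * (S k ω * (1 - S k ω)) - 2 * h ^ 2 +
      2 * h * ({0, 1} : Set ℝ).indicator 1 (S k ω) ≤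
      reflect (S k ω + h) * (1 - reflect (S k ω + h)) +
        reflect (S k ω - h) * (1 - reflect (S k ω - h)) := by
    filter_upwards [hS.ae_mem_Icc hx₀ hh] with ω hω using quad_reflect_add_sub_ge (hω k) h0 h1
  calc ∫ ω, S k ω * (1 - S k ω) ∂P - h ^ 2 + h * P.real (S k ⁻¹' {0, 1})
      = (∫ ω, 2 * (S k ω * (1 - S k ω)) - 2 * h ^ 2 +
          2 * h * ({0, 1} : Set ℝ).indicator 1 (S k ω) ∂P) / 2 := by
        rw [integral_add hlin_int (hbdry_int.const_mul _),
          integral_sub (hq_int.const_mul 2) (integrable_const _), integral_const_mul,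
          integral_const_mul (2 * h), integral_const, hbdry]
        simp only [probReal_univ, smul_eq_mul, one_mul]
        ring
    _ ≤ (∫ ω, reflect (S k ω + h) * (1 - reflect (S k ω + h)) +
          reflect (S k ω - h) * (1 - reflect (S k ω - h)) ∂P) / 2 :=
        div_le_div_of_nonneg_right
          (integral_mono_ae (hlin_int.add (hbdry_int.const_mul _)) (hplus_int.add hminus_int)
            hpoint)
          zero_le_two
    _ = ∫ ω, S (k + 1) ω * (1 - S (k + 1) ω) ∂P := by
        rw [integral_add hplus_int hminus_int,
          hS.integral_comp_succ hx₀ hh k (g := fun s ↦ s * (1 - s)) (by fun_prop)]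

lemma sum_measureReal_boundary_le (hS : IsReflectedWalk P ξ h x₀ S) (hx₀ : x₀ ∈ Icc 0 1)
    (h0 : 0 < h) (h1 : h ≤ 1 / 2) (K : ℕ) :
    h * ∑ k ∈ Finset.range K, P.real (S k ⁻¹' {0, 1}) ≤ 1 / 4 + K * h ^ 2 := by
  set a : ℕ → ℝ := fun k ↦ ∫ ω, S k ω * (1 - S k ω) ∂P
  have ha0 : 0 ≤ a 0 := by
    simp only [a, hS.init, integral_const, probReal_univ, one_smul]
    nlinarith [hx₀.1, hx₀.2]
  have haK : a K ≤ 1 / 4 := by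
    calc a K ≤ ∫ _, 1 / 4 ∂P :=
          integral_mono (hS.integrable_comp hx₀ ⟨h0.le, by linarith⟩ K (g := fun s ↦ s * (1 - s))
            (by fun_prop))
            (integrable_const _) fun ω ↦ by nlinarith [sq_nonneg (S K ω - 1 / 2)]
      _ = 1 / 4 := by simp
  calc h * ∑ k ∈ Finset.range K, P.real (S k ⁻¹' {0, 1})
      ≤ ∑ k ∈ Finset.range K, (a (k + 1) - a k + h ^ 2) := by
        rw [Finset.mul_sum]
        exact Finset.sum_le_sum fun k _ ↦ by linarith [hS.integral_quad_succ_ge hx₀ h0 h1 k]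
    _ = a K - a 0 + K * h ^ 2 := by
        rw [Finset.sum_add_distrib, Finset.sum_range_sub]; simp
    _ ≤ 1 / 4 + K * h ^ 2 := by linarith

lemma integrable_ite_boundary (hS : IsReflectedWalk P ξ h x₀ S) (k : ℕ) :
    Integrable (fun ω ↦ if S k ω = 0 ∨ S k ω = 1 then (1 : ℝ) else 0) P := by
  rw [ite_eq_indicator_preimage]
  exact (integrable_const 1).indicator (hS.measurable k (by measurability))

lemma integrable_boundaryTime (hS : IsReflectedWalk P ξ h x₀ S) (L : ℕ) :
    Integrable (boundaryTime S L) P :=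
  integrable_finsetSum _ fun k _ ↦ hS.integrable_ite_boundary k

lemma integral_boundaryTime_le (hS : IsReflectedWalk P ξ h x₀ S) (hx₀ : x₀ ∈ Icc 0 1)
    (h0 : 0 < h) (h1 : h ≤ 1 / 2) (L : ℕ) :
    ∫ ω, boundaryTime S L ω ∂P ≤ 1 / (4 * h) + (L + 1) * h := by
  have hsum := hS.sum_measureReal_boundary_le hx₀ h0 h1 (L + 1)
  calc ∫ ω, boundaryTime S L ω ∂P = ∑ k ∈ Finset.Icc 1 L, P.real (S k ⁻¹' {0, 1}) := by
        unfold boundaryTime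
        rw [integral_finsetSum _ fun k _ ↦ hS.integrable_ite_boundary k]
        refine Finset.sum_congr rfl fun k _ ↦ ?_
        rw [ite_eq_indicator_preimage, integral_indicator_one (hS.measurable k (by measurability))]
    _ ≤ ∑ k ∈ Finset.range (L + 1), P.real (S k ⁻¹' {0, 1}) :=
        Finset.sum_le_sum_of_subset_of_nonneg
          (fun k hk ↦ by simp only [Finset.mem_Icc, Finset.mem_range] at hk ⊢; omega)
          fun _ _ _ ↦ measureReal_nonneg
    _ ≤ 1 / (4 * h) + (L + 1) * h := by
        rw [← le_div_iff₀' h0] at hsum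
        refine hsum.trans_eq ?_
        push_cast
        field_simp

lemma measure_boundaryTime_ge_le (hS : IsReflectedWalk P ξ h x₀ S) (hx₀ : x₀ ∈ Icc 0 1)
    (h0 : 0 < h) (h1 : h ≤ 1 / 2) {c δ : ℝ} (hc : 0 < c) (hδ : 0 < δ) (L : ℕ) :
    P {ω | δ ≤ c * boundaryTime S L ω} ≤
      ENNReal.ofReal (c * (1 / (4 * h) + (L + 1) * h) / δ) := by
  refine measure_ge_le_ofReal_div
    (.of_forall fun ω ↦ mul_nonneg hc.le (boundaryTime_nonneg S L ω))
    ((hS.integrable_boundaryTime L).const_mul c) hδ ?_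
  rw [integral_const_mul]
  exact mul_le_mul_of_nonneg_left (hS.integral_boundaryTime_le hx₀ h0 h1 L) hc.le

end IsReflectedWalk

lemma occupation_bound_le {γ n ℓ c : ℝ} (hγ : 0 < γ) (hn : 2 ≤ n) (hℓ : ℓ ≤ c * γ * n ^ 4 + 1) :
    1 / (γ * n ^ 4) * (1 / (4 * (n ^ 2)⁻¹) + (ℓ + 1) * (n ^ 2)⁻¹) ≤
      (γ * n ^ 2)⁻¹ + c * (n ^ 2)⁻¹ := by
  have hn0 : 0 < n := by linarith
  field_simp
  nlinarith [pow_le_pow_left₀ zero_le_two hn 4]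

theorem stmt14_general (r σ : ℝ)
    (γ : ℕ → ℝ)
    (hγ : Tendsto (fun n => γ n * (n : ℝ) ^ 2) atTop atTop)
    (Ω : Type*) [MeasurableSpace Ω] (P : Measure Ω) [IsProbabilityMeasure P]
    (ξ : ℕ → ℕ → Ω → ℝ) (S : ℕ → ℕ → Ω → ℝ)
    (hξm : ∀ n k, Measurable (ξ n k))
    (hξindep : ∀ n, iIndepFun (ξ n) P)
    (hξdist : ∀ n k, Measure.map (ξ n k) P
      = (1 / 2 : ENNReal) • Measure.dirac (-1 : ℝ)
        + (1 / 2 : ENNReal) • Measure.dirac (1 : ℝ))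
    (x : ℕ → ℝ) (hx : ∀ n, ∃ i : ℕ, i ≤ n ^ 2 ∧ x n = (i : ℝ) / (n : ℝ) ^ 2)
    (hS0 : ∀ n ω, S n 0 ω = x n)
    (hSrec : ∀ n k ω,
      S n (k + 1) ω = 1 - abs (1 - abs (S n k ω + ξ n (k + 1) ω / (n : ℝ) ^ 2)))
    (ℓ : ℕ → ℕ) (hℓ : ∀ n, ℓ n = ⌈σ ^ 2 * γ n * (n : ℝ) ^ 4 / r ^ 4⌉₊) :
    ∀ δ : ℝ, 0 < δ →
      Tendsto (fun n => P {ω | δ ≤ (1 / (γ n * (n : ℝ) ^ 4))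
          * ∑ k ∈ Finset.Icc 1 (ℓ n),
              (if S n k ω = 0 ∨ S n k ω = 1 then (1 : ℝ) else 0)})
        atTop (nhds 0) := by
  intro δ hδ
  have hlim : Tendsto (fun n : ℕ ↦ ENNReal.ofReal
      (((γ n * (n : ℝ) ^ 2)⁻¹ + σ ^ 2 / r ^ 4 * ((n : ℝ) ^ 2)⁻¹) / δ)) atTop (nhds 0) := by
    have hn2 := ((tendsto_pow_atTop (α := ℝ) two_ne_zero).comp
      tendsto_natCast_atTop_atTop).inv_tendsto_atTop
    simpa using ENNReal.tendsto_ofReal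
      ((hγ.inv_tendsto_atTop.add (hn2.const_mul (σ ^ 2 / r ^ 4))).div_const δ)
  refine tendsto_of_tendsto_of_tendsto_of_le_of_le' tendsto_const_nhds hlim
    (.of_forall fun _ ↦ bot_le) ?_
  filter_upwards [eventually_ge_atTop 2, hγ.eventually_gt_atTop 0] with n hn hγn
  have hn' : (2 : ℝ) ≤ n := by exact_mod_cast hn
  have hγn' : 0 < γ n := (pos_iff_pos_of_mul_pos hγn).2 (by positivity)
  have hwalk : IsReflectedWalk P (ξ n) ((n : ℝ) ^ 2)⁻¹ (x n) (S n) :=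
    ⟨hξm n, hξindep n, hξdist n, hS0 n, fun k ω ↦ by rw [hSrec, div_eq_inv_mul]; rfl⟩
  have hx₀ : x n ∈ Icc 0 1 := by
    obtain ⟨i, hi, hxi⟩ := hx n
    rw [hxi, mem_Icc, div_le_one (by positivity)]
    exact ⟨by positivity, by exact_mod_cast hi⟩
  have hℓn : (ℓ n : ℝ) ≤ σ ^ 2 / r ^ 4 * γ n * n ^ 4 + 1 := by
    rw [hℓ n]
    calc _ ≤ σ ^ 2 * γ n * n ^ 4 / r ^ 4 + 1 := (Nat.ceil_lt_add_one (by positivity)).le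
      _ = _ := by ring
  have hh : ((n : ℝ) ^ 2)⁻¹ ≤ 1 / 2 := by
    rw [← one_div]; exact one_div_le_one_div_of_le two_pos (by nlinarith)
  exact (hwalk.measure_boundaryTime_ge_le hx₀ (by positivity) hh (by positivity) hδ (ℓ n)).trans
    (ENNReal.ofReal_le_ofReal (div_le_div_of_nonneg_right (occupation_bound_le hγn' hn' hℓn) hδ.le))

/-- Time spent at the boundary by a reflected symmetric random walk:
for the walk with step size `1/n²` on `[0,1]`, reflected at `{0,1}` and run for
`ℓₙ = ⌈σ²γₙn⁴/r⁴⌉` steps, `(1/(γₙn⁴)) ∑_{k=1}^{ℓₙ} 1{Sₖ ∈ {0,1}} → 0` in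
probability as `n → ∞`, provided `γₙ n² → ∞`. -/
theorem stmt14 (r σ : ℝ) (hr : 0 < r) (hσ : 0 < σ)
    (γ : ℕ → ℝ) (hγpos : ∀ n, 0 < γ n) (hγ0 : Tendsto γ atTop (nhds 0))
    (hγ : Tendsto (fun n => γ n * (n : ℝ) ^ 2) atTop atTop)
    (Ω : Type*) [MeasurableSpace Ω] (P : Measure Ω) [IsProbabilityMeasure P]
    (ξ : ℕ → ℕ → Ω → ℝ) (S : ℕ → ℕ → Ω → ℝ)
    (hξm : ∀ n k, Measurable (ξ n k))
    (hξindep : ∀ n, iIndepFun (ξ n) P)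
    (hξdist : ∀ n k, Measure.map (ξ n k) P
      = (1 / 2 : ENNReal) • Measure.dirac (-1 : ℝ)
        + (1 / 2 : ENNReal) • Measure.dirac (1 : ℝ))
    (x : ℕ → ℝ) (hx : ∀ n, ∃ i : ℕ, i ≤ n ^ 2 ∧ x n = (i : ℝ) / (n : ℝ) ^ 2)
    (hS0 : ∀ n ω, S n 0 ω = x n)
    (hSrec : ∀ n k ω,
      S n (k + 1) ω = 1 - abs (1 - abs (S n k ω + ξ n (k + 1) ω / (n : ℝ) ^ 2)))
    (ℓ : ℕ → ℕ) (hℓ : ∀ n, ℓ n = ⌈σ ^ 2 * γ n * (n : ℝ) ^ 4 / r ^ 4⌉₊) :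
    ∀ δ : ℝ, 0 < δ →
      Tendsto (fun n => P {ω | δ ≤ (1 / (γ n * (n : ℝ) ^ 4))
          * ∑ k ∈ Finset.Icc 1 (ℓ n),
              (if S n k ω = 0 ∨ S n k ω = 1 then (1 : ℝ) else 0)})
        atTop (nhds 0) :=
  stmt14_general r σ γ hγ Ω P ξ S hξm hξindep hξdist x hx hS0 hSrec ℓ hℓ
end
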